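/- Let X be a Polish space and B a countable family of Borel conditioning events. Then Δ^B(X) is a Borel subset of the product space Δ(X)^B. -/

import Mathlib

open MeasureTheory Set TopologicalSpace

/-- A conditional probability system on `(X, Σ_X, 𝓑)`: a family of probability measures
`μ(·|B)`, `B ∈ 𝓑`, with `μ(B|B) = 1` and the chain rule
`μ(A|B)·μ(B|C) = μ(A|C)` whenever `A ⊆ B ⊆ C`, `A` measurable, `B, C ∈ 𝓑`. -/
def IsCPS {X : Type*} [MeasurableSpace X] (𝓑 : Set (Set X)) (μ : 𝓑 → ProbabilityMeasure X) : Prop :=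
  (∀ B : 𝓑, (μ B : Measure X) (B : Set X) = 1) ∧
  ∀ (A : Set X) (B C : 𝓑), MeasurableSet A → A ⊆ (B : Set X) → (B : Set X) ⊆ (C : Set X) →
    (μ B : Measure X) A * (μ C : Measure X) (B : Set X) = (μ C : Measure X) A

/-!
It suffices to require the chain rule for `A = t ∩ B` with `t` in a countable π-system generating
the Borel sets: for `B ⊆ C` these values determine the finite measure `μ(· ∩ B | C)`, which must
equal `μ(B|C) μ(· ∩ B | B)`. This leaves countably many conditions, each measurable for the
Giry σ-algebra, and on a Polish space the Giry σ-algebra on `Δ(X)` is contained in the Borel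
σ-algebra of the weak topology, since by the portmanteau theorem `μ ↦ μ(G)` is lower
semicontinuous for open `G`.
-/

namespace MeasurableSpace

theorem exists_countable_isPiSystem_generateFrom (X : Type*) [m : MeasurableSpace X]
    [CountablyGenerated X] :
    ∃ T : Set (Set X), T.Countable ∧ IsPiSystem T ∧ m = generateFrom T := by
  refine ⟨sInter '' {F | F.Finite ∧ F ⊆ countableGeneratingSet X},
    (countable_ofPred_finite_subset countable_countableGeneratingSet).image _, ?_,
    le_antisymm ?_ ?_⟩
  · rintro _ ⟨F, ⟨hF, hFS⟩, rfl⟩ _ ⟨G, ⟨hG, hGS⟩, rfl⟩ -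
    exact ⟨F ∪ G, ⟨hF.union hG, union_subset hFS hGS⟩, sInter_union F G⟩
  · conv_lhs => rw [← generateFrom_countableGeneratingSet (α := X)]
    exact generateFrom_mono fun s hs =>
      ⟨{s}, ⟨finite_singleton s, singleton_subset_iff.2 hs⟩, sInter_singleton s⟩
  · refine generateFrom_le ?_
    rintro _ ⟨F, ⟨hF, hFS⟩, rfl⟩
    exact .sInter hF.countable fun s hs => measurableSet_countableGeneratingSet (hFS hs)

theorem pi_le_borel_pi_of_le {ι : Type*} {X : ι → Type*} [∀ i, TopologicalSpace (X i)]
    [m : ∀ i, MeasurableSpace (X i)] (h : ∀ i, m i ≤ borel (X i)) :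
    MeasurableSpace.pi ≤ borel (∀ i, X i) :=
  iSup_le fun i => comap_le_iff_le_map.2 <| (h i).trans (continuous_apply i).borel_measurable.le_map

end MeasurableSpace

namespace MeasureTheory.ProbabilityMeasure

variable {X : Type*} [TopologicalSpace X] [MeasurableSpace X]

theorem lowerSemicontinuous_apply_of_isOpen [OpensMeasurableSpace X] [HasOuterApproxClosed X]
    {G : Set X} (hG : IsOpen G) :
    LowerSemicontinuous fun μ : ProbabilityMeasure X => (μ : Measure X) G :=
  lowerSemicontinuous_iff_le_liminf.2 fun _ =>
    le_liminf_measure_open_of_tendsto Filter.tendsto_id hG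

theorem measurableSpace_le_borel [BorelSpace X] [HasOuterApproxClosed X] :
    (inferInstance : MeasurableSpace (ProbabilityMeasure X)) ≤ borel (ProbabilityMeasure X) := by
  let := borel (ProbabilityMeasure X)
  have : BorelSpace (ProbabilityMeasure X) := ⟨rfl⟩
  have hgen : ‹MeasurableSpace X› = MeasurableSpace.generateFrom {s | IsOpen s} :=
    BorelSpace.measurable_eq
  exact (Measurable.measure_of_isPiSystem_of_isProbabilityMeasure hgen isPiSystem_isOpen
    fun G hG => (lowerSemicontinuous_apply_of_isOpen hG).measurable).comap_le

end MeasureTheory.ProbabilityMeasure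

section ConditionalProbabilitySystem

variable {X : Type*} [MeasurableSpace X]

theorem mul_measure_eq_of_isPiSystem {T : Set (Set X)}
    (hgen : ‹MeasurableSpace X› = MeasurableSpace.generateFrom T) (hpi : IsPiSystem T)
    {ν ρ : Measure X} [IsFiniteMeasure ρ] {B : Set X} (hB : MeasurableSet B)
    (hB_eq : ν B * ρ B = ρ B) (hT : ∀ t ∈ T, ν (t ∩ B) * ρ B = ρ (t ∩ B))
    {A : Set X} (hAB : A ⊆ B) : ν A * ρ B = ρ A := by
  have hrestrict : ρ.restrict B = ρ B • ν.restrict B := by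
    refine ext_of_generate_finite T hgen hpi (fun t ht => ?_) ?_
    · rw [Measure.smul_apply, Measure.restrict_apply' hB, Measure.restrict_apply' hB, smul_eq_mul,
        mul_comm, hT t ht]
    · rw [Measure.smul_apply, Measure.restrict_apply' hB, Measure.restrict_apply' hB, univ_inter,
        smul_eq_mul, mul_comm, hB_eq]
  have hA_eq := congrArg (· A) hrestrict
  simp only [Measure.smul_apply, Measure.restrict_apply' hB, inter_eq_self_of_subset_left hAB,
    smul_eq_mul] at hA_eq
  rw [hA_eq, mul_comm]

variable {𝓑 : Set (Set X)}

theorem isCPS_iff_of_isPiSystem {T : Set (Set X)}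
    (hgen : ‹MeasurableSpace X› = MeasurableSpace.generateFrom T) (hpi : IsPiSystem T)
    (h𝓑m : ∀ B ∈ 𝓑, MeasurableSet B) {μ : 𝓑 → ProbabilityMeasure X} :
    IsCPS 𝓑 μ ↔ (∀ B : 𝓑, (μ B : Measure X) B = 1) ∧
      ∀ B C : 𝓑, (B : Set X) ⊆ C → ∀ t ∈ T,
        (μ B : Measure X) (t ∩ B) * (μ C : Measure X) B = (μ C : Measure X) (t ∩ B) := by
  refine and_congr_right fun h1 => ⟨fun h2 B C hBC t ht => ?_, fun h2 A B C _ hAB hBC => ?_⟩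
  · have ht : MeasurableSet t := hgen ▸ MeasurableSpace.measurableSet_generateFrom ht
    exact h2 _ B C (ht.inter (h𝓑m B B.2)) inter_subset_right hBC
  · exact mul_measure_eq_of_isPiSystem hgen hpi (h𝓑m B B.2) (by rw [h1, one_mul]) (h2 B C hBC) hAB

theorem measurableSet_setOf_isCPS [MeasurableSpace.CountablyGenerated X] (h𝓑c : 𝓑.Countable)
    (h𝓑m : ∀ B ∈ 𝓑, MeasurableSet B) :
    MeasurableSet {μ : 𝓑 → ProbabilityMeasure X | IsCPS 𝓑 μ} := by
  have : Countable 𝓑 := h𝓑c.to_subtype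
  obtain ⟨T, hTc, hpi, hgen⟩ := MeasurableSpace.exists_countable_isPiSystem_generateFrom X
  have hTm : ∀ t ∈ T, MeasurableSet t := fun t ht =>
    hgen ▸ MeasurableSpace.measurableSet_generateFrom ht
  have eval : ∀ (B : 𝓑) {s : Set X}, MeasurableSet s →
      Measurable fun μ : 𝓑 → ProbabilityMeasure X => (μ B : Measure X) s := fun B _ hs =>
    (Measure.measurable_coe hs).comp (measurable_subtype_coe.comp (measurable_pi_apply B))
  simp only [isCPS_iff_of_isPiSystem hgen hpi h𝓑m, ofPred_and, ofPred_forall]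
  refine .inter (.iInter fun B => ?_) (.iInter fun B => .iInter fun C => .iInter fun _ =>
    .biInter hTc fun t ht => ?_)
  · exact eval B (h𝓑m B B.2) (measurableSet_singleton 1)
  · have htB := (hTm t ht).inter (h𝓑m B B.2)
    exact measurableSet_eq_fun ((eval B htB).mul (eval C (h𝓑m B B.2))) (eval C htB)

end ConditionalProbabilitySystem

theorem cps_borel_subset_general {X : Type*} [TopologicalSpace X] [PolishSpace X]
    [MeasurableSpace X] [BorelSpace X]
    (𝓑 : Set (Set X)) (h𝓑c : 𝓑.Countable)
    (h𝓑m : ∀ B ∈ 𝓑, MeasurableSet B) :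
    MeasurableSet[borel (𝓑 → ProbabilityMeasure X)]
      {μ : 𝓑 → ProbabilityMeasure X | IsCPS 𝓑 μ} := by
  exact MeasurableSpace.pi_le_borel_pi_of_le (fun _ => ProbabilityMeasure.measurableSpace_le_borel)
    _ (measurableSet_setOf_isCPS h𝓑c h𝓑m)

/-- For a Polish space `X` and a countable family `𝓑` of Borel conditioning events, `Δ^𝓑(X)`
is a Borel subset of the product space `Δ(X)^𝓑`. -/
theorem cps_borel_subset {X : Type*} [TopologicalSpace X] [PolishSpace X]
    [MeasurableSpace X] [BorelSpace X]
    (𝓑 : Set (Set X)) (h𝓑ne : 𝓑.Nonempty) (h𝓑c : 𝓑.Countable)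
    (h𝓑m : ∀ B ∈ 𝓑, MeasurableSet B) (hempty : ∅ ∉ 𝓑) :
    MeasurableSet[borel (𝓑 → ProbabilityMeasure X)]
      {μ : 𝓑 → ProbabilityMeasure X | IsCPS 𝓑 μ} :=
  cps_borel_subset_general 𝓑 h𝓑c h𝓑m
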